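/- Let (ℒ, 𝒜) be a complete duality pair over a commutative ring R. Then every Gorenstein (ℒ,𝒜)-projective R-module is Gorenstein (ℒ,𝒜)-flat. -/

import Mathlib

open CategoryTheory

universe w u

/-- The character module `M⁺ = Hom_ℤ(M, ℚ/ℤ)` of `M`, as an object of `ModuleCat R`
(with the `R`-action `(r • f) x = f (r • x)`). -/
noncomputable def charMod (R : Type u) [CommRing R] (M : ModuleCat.{u} R) : ModuleCat.{u} R :=
  ModuleCat.of R (CharacterModule M)

/-- `(𝓜, 𝓒)` is a duality pair over `R`: both classes are closed under isomorphism,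
`M ∈ 𝓜 ↔ M⁺ ∈ 𝓒`, and `𝓒` is closed under direct summands and finite direct sums. -/
structure IsDualityPair (R : Type u) [CommRing R]
    (Mc Cc : ModuleCat.{u} R → Prop) : Prop where
  isoClosed_fst : ∀ {A B : ModuleCat.{u} R}, (A ≅ B) → Mc A → Mc B
  isoClosed_snd : ∀ {A B : ModuleCat.{u} R}, (A ≅ B) → Cc A → Cc B
  char_mem_iff : ∀ M : ModuleCat.{u} R, Mc M ↔ Cc (charMod R M)
  summand_closed : ∀ A B : ModuleCat.{u} R, Cc (ModuleCat.of R (A × B)) → Cc A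
  finSum_closed : ∀ A B : ModuleCat.{u} R, Cc A → Cc B → Cc (ModuleCat.of R (A × B))

/-- A duality pair `(𝓜, 𝓒)` is perfect if `R ∈ 𝓜` and `𝓜` is closed under arbitrary
direct sums and under extensions. -/
structure IsPerfectDualityPair (R : Type u) [CommRing R]
    (Mc Cc : ModuleCat.{u} R → Prop) extends IsDualityPair R Mc Cc : Prop where
  self_mem : Mc (ModuleCat.of R R)
  directSum_closed : ∀ (ι : Type u) (A : ι → ModuleCat.{u} R),
    (∀ i, Mc (A i)) → Mc (ModuleCat.of R (DirectSum ι (fun i => A i)))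
  extension_closed : ∀ S : ShortComplex (ModuleCat.{u} R),
    S.ShortExact → Mc S.X₁ → Mc S.X₃ → Mc S.X₂

/-- `(ℒ, 𝒜)` is a complete duality pair: `{ℒ, 𝒜}` is a symmetric duality pair
with `(ℒ, 𝒜)` perfect. -/
structure IsCompleteDualityPair (R : Type u) [CommRing R]
    (Lc Ac : ModuleCat.{u} R → Prop) : Prop where
  perfect : IsPerfectDualityPair R Lc Ac
  snd : IsDualityPair R Ac Lc

/-- The chain complex of abelian groups `Hom_R(M, X)` induced by a chain complex `X`. -/
noncomputable def homFromComplex (R : Type u) [CommRing R] (M : ModuleCat.{u} R)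
    (X : ChainComplex (ModuleCat.{u} R) ℤ) : ChainComplex AddCommGrpCat.{u} ℤ :=
  ((preadditiveCoyoneda.obj (Opposite.op M)).mapHomologicalComplex _).obj X

/-- The complex of abelian groups `Hom_R(X, M)` induced by a chain complex `X`. -/
noncomputable def homToComplex (R : Type u) [CommRing R]
    (X : ChainComplex (ModuleCat.{u} R) ℤ) (M : ModuleCat.{u} R) :
    HomologicalComplex AddCommGrpCat.{u} (ComplexShape.down ℤ).symm :=
  ((preadditiveYoneda.obj M).mapHomologicalComplex _).obj X.op

/-- The chain complex `M ⊗_R X` induced by a chain complex `X`. -/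
noncomputable def tensorComplex (R : Type u) [CommRing R] (M : ModuleCat.{u} R)
    (X : ChainComplex (ModuleCat.{u} R) ℤ) : ChainComplex (ModuleCat.{u} R) ℤ :=
  ((MonoidalCategory.tensorLeft M).mapHomologicalComplex _).obj X

/-- A complex is exact if its homology vanishes in every degree. -/
def ComplexExact {V : Type*} [Category V] [Limits.HasZeroMorphisms V] {ι : Type*}
    {c : ComplexShape ι} (X : HomologicalComplex V c) : Prop :=
  ∀ n, X.ExactAt n

/-- `M` is Gorenstein `(ℒ,𝒜)`-projective: `M ≅ Z₀P` for some exact complex `P` of projectives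
such that `Hom_R(P, L)` is exact for all `L ∈ ℒ`. -/
def IsGorensteinProjective (R : Type u) [CommRing R]
    (Lc : ModuleCat.{u} R → Prop) (M : ModuleCat.{u} R) : Prop :=
  ∃ P : ChainComplex (ModuleCat.{u} R) ℤ,
    (∀ n, Projective (P.X n)) ∧ ComplexExact P ∧
      (∀ L, Lc L → ComplexExact (homToComplex R P L)) ∧
      Nonempty (M ≅ P.cycles 0)

/-- `M` is Gorenstein `(ℒ,𝒜)`-flat: `M ≅ Z₀F` for some exact complex `F` of flat modules
such that `A ⊗_R F` is exact for all `A ∈ 𝒜`. -/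
def IsGorensteinFlat (R : Type u) [CommRing R]
    (Ac : ModuleCat.{u} R → Prop) (M : ModuleCat.{u} R) : Prop :=
  ∃ F : ChainComplex (ModuleCat.{u} R) ℤ,
    (∀ n, Module.Flat R (F.X n)) ∧ ComplexExact F ∧
      (∀ A, Ac A → ComplexExact (tensorComplex R A F)) ∧
      Nonempty (M ≅ F.cycles 0)

/-!
Since `ℚ/ℤ` is an injective cogenerator, a sequence of modules is exact as soon as its character
dual is, and the tensor–hom adjunction identifies `(A ⊗_R P)⁺` with `Hom_R(P, A⁺)`. For `A ∈ 𝒜`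
we have `A⁺ ∈ ℒ`, so the exactness of `Hom_R(P, A⁺)` for the complete resolution `P`
forces `A ⊗_R P` to be exact; projective modules being flat, `P` witnesses Gorenstein flatness.
-/

namespace CharacterModule

variable {R A B C D : Type*} [CommRing R] [AddCommGroup A] [AddCommGroup B] [AddCommGroup C]
  [AddCommGroup D] [Module R A] [Module R B] [Module R C] [Module R D]

theorem exact_of_exact_dual {f : A →ₗ[R] B} {g : B →ₗ[R] C}
    (h : Function.Exact (dual g) (dual f)) : Function.Exact f g := by
  refine Function.Exact.of_comp_of_mem_range ?_ fun b hb ↦ ?_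
  · funext a
    refine eq_zero_of_character_apply fun c ↦ ?_
    exact congr($(h.apply_apply_eq_zero c) a)
  · by_contra hb'
    have hq : (LinearMap.range f).mkQ b ≠ 0 := by
      simpa [Submodule.Quotient.mk_eq_zero] using hb'
    obtain ⟨c, hc⟩ := exists_character_apply_ne_zero_of_ne_zero hq
    obtain ⟨d, hd⟩ := (h (dual (LinearMap.range f).mkQ c)).mp <| by
      rw [← LinearMap.comp_apply, ← dual_comp, LinearMap.range_mkQ_comp, dual_zero,
        LinearMap.zero_apply]
    refine hc ?_
    calc c ((LinearMap.range f).mkQ b) = dual g d b := congr($hd b).symm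
      _ = d (g b) := rfl
      _ = 0 := by rw [hb, map_zero]

theorem dual_rTensor_comp_homEquiv (f : B →ₗ[R] C) :
    dual (f.rTensor A) ∘ₗ homEquiv.toLinearMap =
      homEquiv.toLinearMap ∘ₗ f.lcomp R (CharacterModule A) := by
  rw [← dual_rTensor_conj_homEquiv]
  ext
  simp

theorem lTensor_exact_of_exact_lcomp {f : B →ₗ[R] C} {g : C →ₗ[R] D}
    (h : Function.Exact (g.lcomp R (CharacterModule A)) (f.lcomp R (CharacterModule A))) :
    Function.Exact (f.lTensor A) (g.lTensor A) := by
  have hdual : Function.Exact (dual (g.rTensor A)) (dual (f.rTensor A)) :=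
    (Function.Exact.iff_of_ladder_linearEquiv (dual_rTensor_comp_homEquiv g)
      (dual_rTensor_comp_homEquiv f)).mpr h
  exact (Function.Exact.iff_of_ladder_linearEquiv (LinearMap.lTensor_comp_comm f)
    (LinearMap.lTensor_comp_comm g)).mpr (exact_of_exact_dual hdual)

end CharacterModule

theorem CategoryTheory.ShortComplex.exact_map_tensorLeft_of_exact_op_map_preadditiveYoneda
    {R : Type u} [CommRing R] (S : ShortComplex (ModuleCat.{u} R)) (A : ModuleCat.{u} R)
    (h : (S.op.map (preadditiveYoneda.obj (charMod R A))).Exact) :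
    (S.map (MonoidalCategory.tensorLeft A)).Exact := by
  rw [ab_exact_iff_function_exact] at h
  rw [moduleCat_exact_iff_range_eq_ker, eq_comm, ← LinearMap.exact_iff]
  refine CharacterModule.lTensor_exact_of_exact_lcomp ?_
  exact (Function.Exact.iff_of_ladder_addEquiv (e₁ := ModuleCat.homAddEquiv)
    (e₂ := ModuleCat.homAddEquiv) (e₃ := ModuleCat.homAddEquiv)
    (g₁₂ := (S.g.hom.lcomp R (CharacterModule A)).toAddMonoidHom)
    (g₂₃ := (S.f.hom.lcomp R (CharacterModule A)).toAddMonoidHom) rfl rfl).mpr h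

theorem complexExact_tensorComplex_of_complexExact_homToComplex_charMod
    {R : Type u} [CommRing R] (X : ChainComplex (ModuleCat.{u} R) ℤ) (A : ModuleCat.{u} R)
    (h : ComplexExact (homToComplex R X (charMod R A))) :
    ComplexExact (tensorComplex R A X) := by
  intro n
  have hn := h n
  rw [HomologicalComplex.exactAt_iff' _ (n - 1) n (n + 1)
    ((ComplexShape.down ℤ).symm.prev_eq' (by simp [ComplexShape.symm]))
    ((ComplexShape.down ℤ).symm.next_eq' (by simp [ComplexShape.symm]))] at hn
  rw [HomologicalComplex.exactAt_iff' _ (n + 1) n (n - 1) (by simp) (by simp)]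
  exact (X.sc' (n + 1) n (n - 1)).exact_map_tensorLeft_of_exact_op_map_preadditiveYoneda A hn

/-- For a complete duality pair `(ℒ, 𝒜)`, every Gorenstein `(ℒ,𝒜)`-projective module is
Gorenstein `(ℒ,𝒜)`-flat. -/
theorem gorensteinFlat_of_gorensteinProjective
    (R : Type u) [CommRing R] (Lc Ac : ModuleCat.{u} R → Prop)
    (h : IsCompleteDualityPair R Lc Ac)
    (M : ModuleCat.{u} R) (hM : IsGorensteinProjective R Lc M) :
    IsGorensteinFlat R Ac M := by
  obtain ⟨P, hproj, hexact, hhom, ⟨e⟩⟩ := hM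
  refine ⟨P, fun n ↦ ?_, hexact, fun A hA ↦ ?_, ⟨e⟩⟩
  · have := hproj n
    infer_instance
  · exact complexExact_tensorComplex_of_complexExact_homToComplex_charMod P A
      (hhom _ ((h.snd.char_mem_iff A).mp hA))
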